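/- For every seed x₀ in ZMod (2^n + 1) with canonical value in {0, 1, …, 2^n}, the smallest positive integer p with f^[p](x₀) = x₀ equals the multiplicative order of 2 modulo (2^n + 1)/d, where d = gcd(x₀ + 1, 2^n + 1) computed on canonical values (with the convention that the period is 1 when (2^n + 1)/d = 1). -/
import Mathlib

private lemma slcg_iter_formula (m : ℕ) (p : ℕ) (x : ZMod m) :
    (fun x : ZMod m => 2 * x + 1)^[p] x + 1 = 2 ^ p * (x + 1) := by
  induction p with
  | zero => simp
  | succ p ih =>
    rw [Function.iterate_succ_apply']
    show (2 * ((fun x : ZMod m => 2 * x + 1)^[p] x) + 1) + 1 = _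
    rw [pow_succ]
    calc 2 * ((fun x : ZMod m => 2 * x + 1)^[p] x) + 1 + 1
        = 2 * ((fun x : ZMod m => 2 * x + 1)^[p] x + 1) := by ring
      _ = 2 * (2 ^ p * (x + 1)) := by rw [ih]
      _ = 2 ^ p * 2 * (x + 1) := by ring

/-- The period of any seed `x₀` under the S-LCG map `f x = 2*x + 1` on `ZMod (2^n + 1)`
equals the multiplicative order of `2` modulo `(2^n + 1) / gcd (x₀ + 1) (2^n + 1)`
(computed on canonical values); the degenerate modulus `1` gives order `1`, matching
the convention that the period is `1` in that case. -/
theorem slcg_period_eq_orderOf (n : ℕ) (hn : 1 ≤ n) (x₀ : ZMod (2 ^ n + 1)) :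
    IsLeast {p : ℕ | 0 < p ∧ (fun x : ZMod (2 ^ n + 1) => 2 * x + 1)^[p] x₀ = x₀}
      (orderOf (2 : ZMod ((2 ^ n + 1) / Nat.gcd (x₀.val + 1) (2 ^ n + 1)))) := by
  haveI : NeZero (2 ^ n + 1) := ⟨Nat.succ_ne_zero _⟩
  have hm0 : 0 < 2 ^ n + 1 := Nat.succ_pos _
  have ha0 : 0 < x₀.val + 1 := Nat.succ_pos _
  have hd0 : 0 < Nat.gcd (x₀.val + 1) (2 ^ n + 1) := Nat.gcd_pos_of_pos_left _ ha0
  have hdm : Nat.gcd (x₀.val + 1) (2 ^ n + 1) ∣ 2 ^ n + 1 := Nat.gcd_dvd_right _ _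
  have hda : Nat.gcd (x₀.val + 1) (2 ^ n + 1) ∣ x₀.val + 1 := Nat.gcd_dvd_left _ _
  have hN0 : 0 < (2 ^ n + 1) / Nat.gcd (x₀.val + 1) (2 ^ n + 1) :=
    Nat.div_pos (Nat.le_of_dvd hm0 hdm) hd0
  haveI : NeZero ((2 ^ n + 1) / Nat.gcd (x₀.val + 1) (2 ^ n + 1)) := ⟨hN0.ne'⟩
  have hNdvd : (2 ^ n + 1) / Nat.gcd (x₀.val + 1) (2 ^ n + 1) ∣ 2 ^ n + 1 :=
    Nat.div_dvd_of_dvd hdm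
  have hmodd : Odd (2 ^ n + 1) := by
    refine Even.add_one ?_
    exact (Nat.even_pow).mpr ⟨even_two, by omega⟩
  have hcop2m : Nat.Coprime 2 (2 ^ n + 1) := Nat.coprime_two_left.mpr hmodd
  have hcop2N : Nat.Coprime 2 ((2 ^ n + 1) / Nat.gcd (x₀.val + 1) (2 ^ n + 1)) :=
    hcop2m.coprime_dvd_right hNdvd
  have hcop : Nat.Coprime ((x₀.val + 1) / Nat.gcd (x₀.val + 1) (2 ^ n + 1))
      ((2 ^ n + 1) / Nat.gcd (x₀.val + 1) (2 ^ n + 1)) :=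
    Nat.coprime_div_gcd_div_gcd hd0
  set a := x₀.val + 1 with ha
  set d := Nat.gcd a (2 ^ n + 1) with hd
  set N := (2 ^ n + 1) / d with hN
  -- key equivalence
  have key : ∀ p : ℕ, (fun x : ZMod (2 ^ n + 1) => 2 * x + 1)^[p] x₀ = x₀ ↔
      orderOf (2 : ZMod N) ∣ p := by
    intro p
    have h1 : (fun x : ZMod (2 ^ n + 1) => 2 * x + 1)^[p] x₀ = x₀ ↔
        (2 : ZMod (2 ^ n + 1)) ^ p * (x₀ + 1) = x₀ + 1 := by
      constructor
      · intro h; rw [← slcg_iter_formula, h]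
      · intro h
        have := slcg_iter_formula (2 ^ n + 1) p x₀
        rw [h] at this
        exact add_right_cancel this
    rw [h1]
    have hx : x₀ + 1 = ((a : ℕ) : ZMod (2 ^ n + 1)) := by
      rw [ha]; push_cast [ZMod.natCast_val, ZMod.cast_id]; ring
    rw [hx]
    have h2 : (2 : ZMod (2 ^ n + 1)) ^ p * ((a : ℕ) : ZMod (2 ^ n + 1)) =
        ((a : ℕ) : ZMod (2 ^ n + 1)) ↔
        ((2 ^ p * a : ℕ) : ZMod (2 ^ n + 1)) = ((a : ℕ) : ZMod (2 ^ n + 1)) := by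
      push_cast; rfl
    rw [h2, ZMod.natCast_eq_natCast_iff, Nat.modEq_iff_dvd]
    have h3 : ((a : ℤ) - (2 ^ p * a : ℕ)) = -(((2:ℤ) ^ p - 1) * a) := by push_cast; ring
    rw [h3, dvd_neg]
    have hmeq : ((2 ^ n + 1 : ℕ) : ℤ) = (d : ℤ) * (N : ℤ) := by
      exact_mod_cast (Nat.mul_div_cancel' hdm).symm
    have haeq : (a : ℤ) = (d : ℤ) * ((a / d : ℕ) : ℤ) := by
      exact_mod_cast (Nat.mul_div_cancel' hda).symm
    have h4 : ((2 ^ n + 1 : ℕ) : ℤ) ∣ ((2:ℤ) ^ p - 1) * a ↔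
        (N : ℤ) ∣ ((2:ℤ) ^ p - 1) * ((a / d : ℕ) : ℤ) := by
      rw [hmeq, haeq]
      constructor
      · intro h
        refine (mul_dvd_mul_iff_left (a := (d:ℤ)) (by exact_mod_cast hd0.ne')).mp ?_
        rw [show ((2:ℤ)^p - 1) * ((d:ℤ) * ((a/d : ℕ):ℤ)) =
          (d:ℤ) * (((2:ℤ)^p - 1) * ((a/d : ℕ):ℤ)) from by ring] at h
        exact h
      · intro h
        have := mul_dvd_mul_left (d : ℤ) h
        rw [show ((d:ℤ)) * (((2:ℤ)^p - 1) * ((a/d:ℕ):ℤ)) =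
          ((2:ℤ)^p - 1) * ((d:ℤ) * ((a/d:ℕ):ℤ)) from by ring] at this
        exact this
    have h5 : (N : ℤ) ∣ ((2:ℤ) ^ p - 1) * ((a / d : ℕ) : ℤ) ↔ (N : ℤ) ∣ (2:ℤ) ^ p - 1 := by
      have hcopZ : IsCoprime (((a / d : ℕ) : ℤ)) ((N : ℕ) : ℤ) :=
        Nat.isCoprime_iff_coprime.mpr hcop
      constructor
      · intro h; exact hcopZ.symm.dvd_of_dvd_mul_right h
      · intro h; exact h.mul_right _
    rw [h4, h5, ← ZMod.intCast_zmod_eq_zero_iff_dvd, orderOf_dvd_iff_pow_eq_one]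
    push_cast
    rw [sub_eq_zero]
  constructor
  · refine ⟨?_, (key _).mpr dvd_rfl⟩
    rw [orderOf_pos_iff, isOfFinOrder_iff_pow_eq_one]
    refine ⟨Nat.totient N, Nat.totient_pos.mpr hN0, ?_⟩
    have hmeq := Nat.ModEq.pow_totient hcop2N
    have h6 : ((2 ^ Nat.totient N : ℕ) : ZMod N) = ((1 : ℕ) : ZMod N) :=
      (ZMod.natCast_eq_natCast_iff _ _ _).mpr hmeq
    push_cast at h6
    exact h6
  · rintro p ⟨hp0, hfix⟩
    exact Nat.le_of_dvd hp0 ((key p).mp hfix)
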